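/- For all f, g, h ∈ ℒ∨(𝕀): (f ⊗ g)* = g* ⊕ f*, and the residuation laws hold: f ⊗ g ≤ h if and only if f ≤ h ⊕ g*, if and only if g ≤ f* ⊕ h (all inequalities pointwise). -/
import Mathlib


noncomputable section

instance : Fact ((0:ℝ) ≤ 1) := ⟨zero_le_one⟩

/-- `𝕀` is the real unit interval `[0,1]`, a complete lattice. -/
notation "𝕀" => unitInterval

/-- `f^∧(x) = ⨅_{x < x'} f x'`, the meet-continuous closure data of `f`. -/
def mCl (f : 𝕀 → 𝕀) : 𝕀 → 𝕀 :=
  fun x => ⨅ y : {y : 𝕀 // x < y}, f y.1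

/-- `f^∨(x) = ⨆_{x' < x} f x'`, the join-continuous closure data of `f`. -/
def jCl (f : 𝕀 → 𝕀) : 𝕀 → 𝕀 :=
  fun x => ⨆ y : {y : 𝕀 // y.1 < x}, f y.1

/-- `f` is join-continuous: it preserves all suprema. -/
def JoinCont (f : 𝕀 → 𝕀) : Prop :=
  ∀ S : Set 𝕀, f (sSup S) = ⨆ x ∈ S, f x

/-- `f` is meet-continuous: it preserves all infima. -/
def MeetCont (f : 𝕀 → 𝕀) : Prop :=
  ∀ S : Set 𝕀, f (sInf S) = ⨅ x ∈ S, f x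

/-- The right adjoint `f^ρ` of a join-continuous `f`. -/
def radj (f : 𝕀 → 𝕀) : 𝕀 → 𝕀 := fun y => sSup {x | f x ≤ y}

/-- The left adjoint `g^λ` of a meet-continuous `g`. -/
def ladj (g : 𝕀 → 𝕀) : 𝕀 → 𝕀 := fun y => sInf {x | y ≤ g x}

/-- `f* := (f^ρ)^∨`. -/
def starF (f : 𝕀 → 𝕀) : 𝕀 → 𝕀 := jCl (radj f)

/-- `f ⊗ g := g ∘ f`. -/
def otimes (f g : 𝕀 → 𝕀) : 𝕀 → 𝕀 := g ∘ f

/-- `f ⊕ g := (g^∧ ∘ f^∧)^∨`. -/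
def oplus (f g : 𝕀 → 𝕀) : 𝕀 → 𝕀 := jCl (mCl g ∘ mCl f)

/-- A tuple is closed if `f_{i,j} ⊗ f_{j,k} ≤ f_{i,k}` for `i < j < k`. -/
def ClosedT (d : ℕ) (f : Fin d → Fin d → (𝕀 → 𝕀)) : Prop :=
  ∀ i j k : Fin d, i < j → j < k → ∀ x, otimes (f i j) (f j k) x ≤ f i k x

/-- A tuple is open if `f_{i,k} ≤ f_{i,j} ⊕ f_{j,k}` for `i < j < k`. -/
def OpenT (d : ℕ) (f : Fin d → Fin d → (𝕀 → 𝕀)) : Prop :=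
  ∀ i j k : Fin d, i < j → j < k → ∀ x, f i k x ≤ oplus (f i j) (f j k) x

/-- Pointwise order on the meaningful (`i < j`) entries of tuples. -/
def TLE (d : ℕ) (f g : Fin d → Fin d → (𝕀 → 𝕀)) : Prop :=
  ∀ i j : Fin d, i < j → ∀ x, f i j x ≤ g i j x

/-- Each meaningful entry of the tuple is join-continuous. -/
def TupleJC (d : ℕ) (f : Fin d → Fin d → (𝕀 → 𝕀)) : Prop :=
  ∀ i j : Fin d, i < j → JoinCont (f i j)

/-- `⊕`-value of a subdivision `ℓ₀ < ℓ₁ < … < ℓ_k`: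
`f_{ℓ₀,ℓ₁} ⊕ f_{ℓ₁,ℓ₂} ⊕ … ⊕ f_{ℓ_{k-1},ℓ_k}`. -/
def oplusChain {d : ℕ} (f : Fin d → Fin d → (𝕀 → 𝕀)) : List (Fin d) → (𝕀 → 𝕀)
  | [] => id
  | [_] => id
  | a :: b :: l => oplus (f a b) (oplusChain f (b :: l))

/-- Subdivisions of the interval `[i,j]`: strictly increasing lists from `i` to `j`. -/
def Subdiv (d : ℕ) (i j : Fin d) : Set (List (Fin d)) :=
  {L | L.Chain' (· < ·) ∧ L.head? = some i ∧ L.getLast? = some j}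

/-- The interior of a tuple: `interior(f)_{i,j}` is the infimum, over all subdivisions
`i = ℓ₀ < ℓ₁ < … < ℓ_k = j`, of `f_{ℓ₀,ℓ₁} ⊕ … ⊕ f_{ℓ_{k-1},ℓ_k}`. -/
def interiorT (d : ℕ) (f : Fin d → Fin d → (𝕀 → 𝕀)) : Fin d → Fin d → (𝕀 → 𝕀) :=
  fun i j => ⨅ L : Subdiv d i j, oplusChain f L.1

/-- The chain `C_f ⊆ 𝕀²` associated to a monotone `f : 𝕀 → 𝕀`. -/
def Cf2 (f : 𝕀 → 𝕀) : Set (𝕀 × 𝕀) :=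
  {p | jCl f p.1 ≤ p.2 ∧ p.2 ≤ mCl f p.1}

/-- `f_C^-(x) = ⨅ {y | (x,y) ∈ C}`. -/
def fCm (C : Set (𝕀 × 𝕀)) : 𝕀 → 𝕀 := fun x => sInf {y | (x, y) ∈ C}

/-- `f_C^+(x) = ⨆ {y | (x,y) ∈ C}`. -/
def fCp (C : Set (𝕀 × 𝕀)) : 𝕀 → 𝕀 := fun x => sSup {y | (x, y) ∈ C}

/-- Compatibility of a (fully extended) tuple: `f_{j,k} ∘ f_{i,j} ≤ f_{i,k}` for all `i,j,k`. -/
def Compatible (d : ℕ) (f : Fin d → Fin d → (𝕀 → 𝕀)) : Prop :=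
  ∀ i j k : Fin d, ∀ x, f j k (f i j x) ≤ f i k x

/-- The subset `C_f ⊆ 𝕀^d` associated to a compatible tuple. -/
def Cfd (d : ℕ) (f : Fin d → Fin d → (𝕀 → 𝕀)) : Set (Fin d → 𝕀) :=
  {x | ∀ i j : Fin d, f i j (x i) ≤ x j}

/-- `v(C)_{i,j}(x) = ⨅ {c_j | c ∈ C, c_i = x}`. -/
def vC (d : ℕ) (C : Set (Fin d → 𝕀)) (i j : Fin d) : 𝕀 → 𝕀 :=
  fun x => sInf {z | ∃ c ∈ C, c i = x ∧ c j = z}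

/-- Canonical extension of a tuple given on `i < j` to all pairs:
identity on the diagonal and `f_{j,i} := (f_{i,j})*` below it. -/
def extT (d : ℕ) (g : Fin d → Fin d → (𝕀 → 𝕀)) : Fin d → Fin d → (𝕀 → 𝕀) :=
  fun i j => if i < j then g i j else if j < i then starF (g j i) else id

/-- The one-step function `h_{x,y}`. -/
def oneStep (x y : 𝕀) : 𝕀 → 𝕀 := fun t => if t ≤ x then 0 else y


lemma sSup_Iio' (a : 𝕀) : sSup (Set.Iio a) = a := by
  refine le_antisymm (sSup_le fun x hx => hx.le) ?_
  by_contra hlt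
  push_neg at hlt
  obtain ⟨z, hz1, hz2⟩ := exists_between hlt
  exact absurd (le_sSup (show z ∈ Set.Iio a from hz2)) (not_le.mpr hz1)

lemma JoinCont.mono {f : 𝕀 → 𝕀} (hf : JoinCont f) : Monotone f := by
  intro a b hab
  have h := hf {a, b}
  rw [sSup_pair, sup_eq_right.mpr hab] at h
  rw [h]
  exact le_biSup f (Set.mem_insert a {b})

lemma JoinCont.adj {f : 𝕀 → 𝕀} (hf : JoinCont f) (x y : 𝕀) :
    f x ≤ y ↔ x ≤ radj f y := by
  constructor
  · intro h; exact le_sSup h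
  · intro h
    calc f x ≤ f (radj f y) := hf.mono h
    _ ≤ y := by rw [radj, hf]; exact iSup₂_le fun i hi => hi

lemma JoinCont.counit {f : 𝕀 → 𝕀} (hf : JoinCont f) (y : 𝕀) : f (radj f y) ≤ y :=
  (hf.adj _ y).2 le_rfl

lemma radj_mono {f : 𝕀 → 𝕀} : Monotone (radj f) := by
  intro a b hab
  exact sSup_le_sSup fun x hx => le_trans hx hab

/-- f x as sup over z < x, for join-continuous f -/
lemma JoinCont.eq_jCl {f : 𝕀 → 𝕀} (hf : JoinCont f) (x : 𝕀) : f x = jCl f x := by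
  have h := hf (Set.Iio x)
  rw [sSup_Iio'] at h
  rw [h, jCl]
  rw [iSup_subtype']
  rfl

lemma mCl_radj {f : 𝕀 → 𝕀} (hf : JoinCont f) : mCl (radj f) = radj f := by
  funext x
  refine le_antisymm ?_ (le_iInf fun y => radj_mono y.2.le)
  rw [← hf.adj]
  by_contra hlt
  push_neg at hlt
  obtain ⟨z, hz1, hz2⟩ := exists_between hlt
  have : f (mCl (radj f) x) ≤ z := by
    calc f (mCl (radj f) x) ≤ f (radj f z) := hf.mono (iInf_le (fun y : {y : 𝕀 // x < y} => radj f y.1) ⟨z, hz1⟩)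
    _ ≤ z := hf.counit z
  exact absurd this (not_le.mpr hz2)

/-- mCl (jCl u) = mCl u for monotone u -/
lemma mCl_jCl {u : 𝕀 → 𝕀} (hu : Monotone u) : mCl (jCl u) = mCl u := by
  funext x
  apply le_antisymm
  · exact le_iInf fun y => le_trans (iInf_le _ y) (iSup_le fun z => hu z.2.le)
  · refine le_iInf fun y => ?_
    obtain ⟨z, hz1, hz2⟩ := exists_between y.2
    exact le_trans (iInf_le (fun y : {y : 𝕀 // x < y} => u y.1) ⟨z, hz1⟩) (le_iSup (fun w : {w : 𝕀 // w.1 < y.1} => u w.1) ⟨z, hz2⟩)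

lemma JoinCont.map_iSup {g : 𝕀 → 𝕀} {ι : Sort*} (hg : JoinCont g) (u : ι → 𝕀) :
    g (⨆ i, u i) = ⨆ i, g (u i) := by
  rw [← sSup_range, hg, iSup_range]

lemma mCl_starF {f : 𝕀 → 𝕀} (hf : JoinCont f) : mCl (starF f) = radj f := by
  rw [starF, mCl_jCl radj_mono, mCl_radj hf]


/-- `(f ⊗ g)* = g* ⊕ f*` and the residuation laws:
`f ⊗ g ≤ h ↔ f ≤ h ⊕ g* ↔ g ≤ f* ⊕ h`. -/
theorem statement5 (f g h : 𝕀 → 𝕀) (hf : JoinCont f) (hg : JoinCont g)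
    (hh : JoinCont h) :
    starF (otimes f g) = oplus (starF g) (starF f) ∧
    ((∀ x, otimes f g x ≤ h x) ↔ (∀ x, f x ≤ oplus h (starF g) x)) ∧
    ((∀ x, otimes f g x ≤ h x) ↔ (∀ x, g x ≤ oplus (starF f) h x)) := by
  have hradj : radj (otimes f g) = radj f ∘ radj g := by
    funext y
    have : {x | otimes f g x ≤ y} = Set.Iic (radj f (radj g y)) := by
      ext x
      simp only [otimes, Function.comp, Set.mem_setOf_eq, Set.mem_Iic]
      rw [hg.adj, hf.adj]
    rw [radj, this, csSup_Iic]; rfl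
  refine ⟨?_, ?_, ?_⟩
  · rw [starF, hradj, oplus, mCl_starF hf, mCl_starF hg]
  · -- f ⊗ g ≤ h ↔ f ≤ h ⊕ g*
    constructor
    · intro H x
      rw [hf.eq_jCl x, jCl]
      refine iSup_le fun z => ?_
      refine le_trans ?_ (le_iSup (fun w : {w : 𝕀 // w.1 < x} =>
        (mCl (starF g) ∘ mCl h) w.1) z)
      simp only [Function.comp, mCl_starF hg]
      rw [← hg.adj]
      refine le_iInf fun w => ?_
      exact le_trans (hg.mono (hf.mono w.2.le)) (H w.1)
    · intro H x
      have h1 : f x ≤ ⨆ z : {z : 𝕀 // z.1 < x}, radj g (mCl h z.1) := by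
        have := H x
        rwa [oplus, jCl, mCl_starF hg] at this
      calc otimes f g x = g (f x) := rfl
        _ ≤ g (⨆ z : {z : 𝕀 // z.1 < x}, radj g (mCl h z.1)) := hg.mono h1
        _ = ⨆ z : {z : 𝕀 // z.1 < x}, g (radj g (mCl h z.1)) :=
            hg.map_iSup _
        _ ≤ h x := by
            refine iSup_le fun z => le_trans (hg.counit _) ?_
            exact iInf_le (fun w : {w : 𝕀 // z.1 < w} => h w.1) ⟨x, z.2⟩
  · -- f ⊗ g ≤ h ↔ g ≤ f* ⊕ h
    constructor
    · intro H x
      rw [hg.eq_jCl x, jCl]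
      refine iSup_le fun z => ?_
      refine le_trans ?_ (le_iSup (fun w : {w : 𝕀 // w.1 < x} =>
        (mCl h ∘ mCl (starF f)) w.1) z)
      simp only [Function.comp, mCl_starF hf]
      refine le_iInf fun w => ?_
      have hzfw : z.1 ≤ f w.1 := by
        by_contra hc
        push_neg at hc
        exact absurd (le_sSup (show w.1 ∈ {t | f t ≤ z.1} from hc.le)) (not_le.mpr w.2)
      exact le_trans (hg.mono hzfw) (H w.1)
    · intro H x
      have h1 : g (f x) ≤ ⨆ z : {z : 𝕀 // z.1 < f x}, mCl h (radj f z.1) := by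
        have := H (f x)
        rwa [oplus, jCl, mCl_starF hf] at this
      refine le_trans h1 (iSup_le fun z => ?_)
      have hlt : radj f z.1 < x := by
        by_contra hc
        push_neg at hc
        exact absurd ((hf.adj x z.1).2 hc) (not_le.mpr z.2)
      exact iInf_le (fun w : {w : 𝕀 // radj f z.1 < w} => h w.1) ⟨x, hlt⟩


end
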